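/- Every differentiable solution τ ↦ (x1(τ), x2(τ), z5(τ), z6(τ)) of the averaged ESC closed-loop system that is defined for all τ ≥ 0 and satisfies z5(0)² + z6(0)² = 1 has bounded range and converges to the source in average: (x1(τ), x2(τ)) → (0, 0) as τ → ∞. (This is the averaged-system form of the convergence claim of Proposition 2: the averaged shifted positions z̃_{1,avg}, z̃_{2,avg} tend to zero, i.e., the average trajectory of the robot under the ESC-based projected gradient-ascent control law converges to the maximizer of the quadratic potential.) -/

import Mathlib

/-!
`V = C1 c1 x1² + C2 c2 x2²` is a Lyapunov function: `V' = -2 (a k1/ω0) S²`, where `S` and `T`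
are the components of the weighted gradient `(C1 c1 x1, C2 c2 x2)` along and across the heading
`(z5, z6)`, which stays on the unit circle. So the state is bounded and `S²` is integrable on
`[0, ∞)`. Every derivative in sight is a continuous function of the bounded state, hence bounded,
so `S` and `T` are Lipschitz and Barbalat's lemma gives `S → 0`. Next,
`S' = -(a k1/ω0)(C1 c1 z5² + C2 c2 z6²) S + (a k2/ω0) T²` forces the unit-window integrals of
`T²` to tend to `0`, and Barbalat again gives `T → 0`. Rotating `(S, T)` back by the heading
recovers `(C1 c1 x1, C2 c2 x2) → 0`.
-/

open Real Filter

/-- The averaged ESC closed-loop system with positive constants `a, k1, k2, ω0, C1, C2, c1, c2`: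
`x1' = −(a k1/ω0) z5 (C1 c1 x1 z5 + C2 c2 x2 z6)`,
`x2' = −(a k1/ω0) z6 (C1 c1 x1 z5 + C2 c2 x2 z6)`,
`z5' = (a k2/ω0) z6 (C1 c1 x1 z6 − C2 c2 x2 z5)`,
`z6' = −(a k2/ω0) z5 (C1 c1 x1 z6 − C2 c2 x2 z5)`, holding for all `τ ∈ s`. -/
def AvgESC (a k1 k2 ω0 C1 C2 c1 c2 : ℝ) (x1 x2 z5 z6 : ℝ → ℝ) (s : Set ℝ) : Prop :=
  ∀ τ ∈ s,
    HasDerivAt x1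
      (-(a * k1 / ω0) * z5 τ * (C1 * c1 * x1 τ * z5 τ + C2 * c2 * x2 τ * z6 τ)) τ ∧
    HasDerivAt x2
      (-(a * k1 / ω0) * z6 τ * (C1 * c1 * x1 τ * z5 τ + C2 * c2 * x2 τ * z6 τ)) τ ∧
    HasDerivAt z5
      ((a * k2 / ω0) * z6 τ * (C1 * c1 * x1 τ * z6 τ - C2 * c2 * x2 τ * z5 τ)) τ ∧
    HasDerivAt z6
      (-(a * k2 / ω0) * z5 τ * (C1 * c1 * x1 τ * z6 τ - C2 * c2 * x2 τ * z5 τ)) τ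

open Set MeasureTheory Topology
open scoped NNReal Interval

theorem tendsto_intervalIntegral_add_one_of_integrableOn_Ioi {E : Type*} [NormedAddCommGroup E]
    [NormedSpace ℝ E] {f : ℝ → E} {a : ℝ} (hf : IntegrableOn f (Ioi a)) :
    Tendsto (fun t => ∫ x in t..t + 1, f x) atTop (𝓝 0) := by
  have htail := tendsto_integral_Ioi_zero (f := f) (μ := volume) tendsto_id
  rw [← sub_zero (0 : E)]
  refine (htail.sub (htail.comp (tendsto_atTop_add_const_right _ 1 tendsto_id))).congr' ?_
  filter_upwards [eventually_ge_atTop a] with t ht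
  exact intervalIntegral.integral_Ioi_sub_Ioi (hf.mono_set (Ioi_subset_Ioi ht)) (by simp)

theorem tendsto_intervalIntegral_add_one_of_tendsto_zero {E : Type*} [NormedAddCommGroup E]
    [NormedSpace ℝ E] {f : ℝ → E} (hf : Tendsto f atTop (𝓝 0)) :
    Tendsto (fun t => ∫ x in t..t + 1, f x) atTop (𝓝 0) := by
  rw [Metric.tendsto_atTop] at hf ⊢
  intro ε hε
  obtain ⟨N, hN⟩ := hf (ε / 2) (half_pos hε)
  refine ⟨N, fun t ht => ?_⟩
  have hbound : ∀ x ∈ Ι t (t + 1), ‖f x‖ ≤ ε / 2 := fun x hx => by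
    rw [uIoc_of_le (by linarith)] at hx
    simpa using (hN x (ht.trans hx.1.le)).le
  calc dist (∫ x in t..t + 1, f x) 0
      ≤ ε / 2 * |t + 1 - t| := by
        simpa using intervalIntegral.norm_integral_le_of_norm_le_const hbound
    _ < ε := by norm_num; linarith

/-- The window integrals of `h` equal `f (t + 1) - f t - ∫ g`. -/
theorem tendsto_intervalIntegral_add_one_of_hasDerivAt_add {E : Type*} [NormedAddCommGroup E]
    [NormedSpace ℝ E] [CompleteSpace E] {f g h : ℝ → E} (hf : Tendsto f atTop (𝓝 0))
    (hg : Tendsto g atTop (𝓝 0)) (hgc : ContinuousOn g (Ici 0)) (hhc : ContinuousOn h (Ici 0))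
    (hderiv : ∀ τ ∈ Ici (0 : ℝ), HasDerivAt f (g τ + h τ) τ) :
    Tendsto (fun t => ∫ x in t..t + 1, h x) atTop (𝓝 0) := by
  have hlim := ((hf.comp (tendsto_atTop_add_const_right _ 1 tendsto_id)).sub hf).sub
    (tendsto_intervalIntegral_add_one_of_tendsto_zero hg)
  rw [sub_zero, sub_zero] at hlim
  refine hlim.congr' ?_
  filter_upwards [eventually_ge_atTop 0] with t ht
  have hsub : Icc t (t + 1) ⊆ Ici 0 := fun x hx => ht.trans hx.1
  have hg_int := (hgc.mono hsub).intervalIntegrable_of_Icc (μ := volume) (by linarith)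
  have hh_int := (hhc.mono hsub).intervalIntegrable_of_Icc (μ := volume) (by linarith)
  have hftc := intervalIntegral.integral_eq_sub_of_hasDerivAt
    (fun x hx => hderiv x (hsub (by rwa [uIcc_of_le (by linarith)] at hx))) (hg_int.add hh_int)
  rw [intervalIntegral.integral_add hg_int hh_int] at hftc
  simp only [Function.comp_apply, id, ← hftc]
  abel

theorem le_intervalIntegral_sq_of_lipschitzOnWith {f : ℝ → ℝ} {K : ℝ≥0}
    (hf : LipschitzOnWith K f (Ici 0)) {t δ : ℝ} (ht : 0 ≤ t) (hδ₀ : 0 ≤ δ) (hδ₁ : δ ≤ 1)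
    (hKδ : K * δ ≤ |f t| / 2) :
    δ * (|f t| / 2) ^ 2 ≤ ∫ x in t..t + 1, f x ^ 2 := by
  have hcont : ContinuousOn (fun x => f x ^ 2) (Icc t (t + 1)) :=
    (hf.continuousOn.mono fun x hx => ht.trans hx.1).pow 2
  have hnear : ∀ x ∈ Icc t (t + δ), (|f t| / 2) ^ 2 ≤ f x ^ 2 := fun x hx => by
    have hdist : |f x - f t| ≤ K * δ := by
      have := hf.dist_le_mul x (ht.trans hx.1) t ht
      rw [Real.dist_eq, Real.dist_eq, abs_of_nonneg (sub_nonneg.2 hx.1)] at this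
      exact this.trans (by gcongr; linarith [hx.2])
    rw [← sq_abs (f x)]
    gcongr
    linarith [abs_sub_abs_le_abs_sub (f t) (f x), abs_sub_comm (f t) (f x)]
  calc δ * (|f t| / 2) ^ 2 = ∫ _ in t..t + δ, (|f t| / 2) ^ 2 := by simp
    _ ≤ ∫ x in t..t + δ, f x ^ 2 :=
        intervalIntegral.integral_mono_on (by linarith) (by simp)
          ((hcont.mono (Icc_subset_Icc_right (by linarith))).intervalIntegrable_of_Icc
            (by linarith)) hnear
    _ ≤ ∫ x in t..t + 1, f x ^ 2 :=
        intervalIntegral.integral_mono_interval le_rfl (by linarith) (by linarith)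
          (ae_of_all _ fun x => sq_nonneg _) (hcont.intervalIntegrable_of_Icc (by linarith))

/-- Barbalat's lemma, with unit windows. -/
theorem tendsto_zero_of_lipschitzOnWith_of_tendsto_intervalIntegral_sq {f : ℝ → ℝ} {K : ℝ≥0}
    (hf : LipschitzOnWith K f (Ici 0))
    (hwin : Tendsto (fun t => ∫ x in t..t + 1, f x ^ 2) atTop (𝓝 0)) :
    Tendsto f atTop (𝓝 0) := by
  rw [Metric.tendsto_atTop] at hwin ⊢
  intro ε hε
  set δ := min 1 (ε / (2 * (K + 1)))
  have hδ : 0 < δ := lt_min one_pos (by positivity)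
  have hKδ : K * δ ≤ ε / 2 := calc
    (K : ℝ) * δ ≤ (K + 1) * (ε / (2 * (K + 1))) := by gcongr <;> simp [δ]
    _ = ε / 2 := by field_simp
  obtain ⟨N, hN⟩ := hwin (δ * (ε / 2) ^ 2) (by positivity)
  refine ⟨max N 0, fun t ht => ?_⟩
  by_contra! hft
  rw [Real.dist_eq, sub_zero] at hft
  have hlow := le_intervalIntegral_sq_of_lipschitzOnWith hf (le_of_max_le_right ht) hδ.le
    (min_le_left _ _) (by linarith)
  have hup := hN t (le_of_max_le_left ht)
  rw [Real.dist_eq, sub_zero] at hup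
  have : δ * (ε / 2) ^ 2 ≤ δ * (|f t| / 2) ^ 2 := by gcongr
  linarith [le_abs_self (∫ x in t..t + 1, f x ^ 2)]

theorem exists_lipschitzOnWith_of_hasDerivAt_comp {E F : Type*} [NormedAddCommGroup E]
    [ProperSpace E] [NormedAddCommGroup F] [NormedSpace ℝ F] {f : ℝ → F} {u : ℝ → E}
    {Φ : E → F} {s : Set ℝ} {R : ℝ} (hs : Convex ℝ s) (hΦ : Continuous Φ)
    (hu : ∀ τ ∈ s, ‖u τ‖ ≤ R) (hf : ∀ τ ∈ s, HasDerivAt f (Φ (u τ)) τ) :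
    ∃ K, LipschitzOnWith K f s := by
  obtain ⟨C, hC⟩ :=
    (isCompact_closedBall (0 : E) R).exists_bound_of_continuousOn hΦ.continuousOn
  refine ⟨C.toNNReal, hs.lipschitzOnWith_of_nnnorm_hasDerivWithin_le
    (fun τ hτ => (hf τ hτ).hasDerivWithinAt) fun τ hτ => ?_⟩
  rw [← NNReal.coe_le_coe, coe_nnnorm, Real.coe_toNNReal']
  exact (hC _ (mem_closedBall_zero_iff.2 (hu τ hτ))).trans (le_max_left _ _)

theorem isBoundedUnder_norm_comp {α E F : Type*} [NormedAddCommGroup E] [ProperSpace E]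
    [SeminormedAddGroup F] {l : Filter α} {u : α → E} {Φ : E → F} {R : ℝ} (hΦ : Continuous Φ)
    (hu : ∀ᶠ x in l, ‖u x‖ ≤ R) :
    IsBoundedUnder (· ≤ ·) l (norm ∘ fun x => Φ (u x)) := by
  obtain ⟨C, hC⟩ :=
    (isCompact_closedBall (0 : E) R).exists_bound_of_continuousOn hΦ.continuousOn
  exact isBoundedUnder_of_eventually_le (hu.mono fun x hx => hC _ (mem_closedBall_zero_iff.2 hx))

theorem abs_le_one_of_sq_add_sq_eq_one {x y : ℝ} (h : x ^ 2 + y ^ 2 = 1) : |x| ≤ 1 :=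
  (sq_le_one_iff_abs_le_one x).1 (by nlinarith [sq_nonneg y])

/- For a state `v = (x1, x2, z5, z6)`: the components of the weighted gradient
`(C1 c1 x1, C2 c2 x2)` along and across the heading `(z5, z6)`. -/
def alongHeading (C1 C2 c1 c2 : ℝ) (v : ℝ × ℝ × ℝ × ℝ) : ℝ :=
  C1 * c1 * v.1 * v.2.2.1 + C2 * c2 * v.2.1 * v.2.2.2

def acrossHeading (C1 C2 c1 c2 : ℝ) (v : ℝ × ℝ × ℝ × ℝ) : ℝ :=
  C1 * c1 * v.1 * v.2.2.2 - C2 * c2 * v.2.1 * v.2.2.1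

@[fun_prop]
theorem continuous_alongHeading (C1 C2 c1 c2 : ℝ) : Continuous (alongHeading C1 C2 c1 c2) := by
  unfold alongHeading; fun_prop

@[fun_prop]
theorem continuous_acrossHeading (C1 C2 c1 c2 : ℝ) :
    Continuous (acrossHeading C1 C2 c1 c2) := by
  unfold acrossHeading; fun_prop

namespace AvgESC

variable {a k1 k2 ω0 C1 C2 c1 c2 : ℝ} {x1 x2 z5 z6 : ℝ → ℝ}

local notation "𝐮" => fun τ => (x1 τ, x2 τ, z5 τ, z6 τ)
local notation "𝐒" => fun τ => alongHeading C1 C2 c1 c2 (x1 τ, x2 τ, z5 τ, z6 τ)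
local notation "𝐓" => fun τ => acrossHeading C1 C2 c1 c2 (x1 τ, x2 τ, z5 τ, z6 τ)
local notation "𝐕" => fun τ => C1 * c1 * x1 τ ^ 2 + C2 * c2 * x2 τ ^ 2

variable (hsol : AvgESC a k1 k2 ω0 C1 C2 c1 c2 x1 x2 z5 z6 (Ici 0))
include hsol

theorem continuousOn_state : ContinuousOn 𝐮 (Ici 0) := fun τ hτ => by
  obtain ⟨h1, h2, h3, h4⟩ := hsol τ hτ
  exact (h1.continuousAt.prodMk (h2.continuousAt.prodMk
    (h3.continuousAt.prodMk h4.continuousAt))).continuousWithinAt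

theorem sq_add_sq_eq_one (hinit : z5 0 ^ 2 + z6 0 ^ 2 = 1) {τ : ℝ} (hτ : 0 ≤ τ) :
    z5 τ ^ 2 + z6 τ ^ 2 = 1 := by
  have hderiv : ∀ x ∈ Ici (0 : ℝ), HasDerivAt (fun y => z5 y ^ 2 + z6 y ^ 2) 0 x :=
    fun x hx => by
      obtain ⟨-, -, h5, h6⟩ := hsol x hx
      exact ((h5.fun_pow 2).add (h6.fun_pow 2)).congr_deriv (by norm_num; ring)
  have hcont : ContinuousOn (fun y => z5 y ^ 2 + z6 y ^ 2) (Icc 0 τ) :=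
    ((continuous_snd.snd.fst.pow 2).add (continuous_snd.snd.snd.pow 2)).comp_continuousOn
      ((continuousOn_state hsol).mono Icc_subset_Ici_self)
  rw [← hinit]
  exact constant_of_has_deriv_right_zero hcont (fun x hx => (hderiv x hx.1).hasDerivWithinAt)
    τ ⟨hτ, le_rfl⟩

theorem hasDerivAt_energy {τ : ℝ} (hτ : 0 ≤ τ) :
    HasDerivAt 𝐕 (-(2 * (a * k1 / ω0)) * 𝐒 τ ^ 2) τ := by
  obtain ⟨h1, h2, -, -⟩ := hsol τ hτ
  exact (((h1.fun_pow 2).const_mul (C1 * c1)).add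
    ((h2.fun_pow 2).const_mul (C2 * c2))).congr_deriv (by norm_num [alongHeading]; ring)

theorem hasDerivAt_alongHeading {τ : ℝ} (hτ : 0 ≤ τ) :
    HasDerivAt 𝐒 (-(a * k1 / ω0 * (C1 * c1 * z5 τ ^ 2 + C2 * c2 * z6 τ ^ 2)) * 𝐒 τ
      + a * k2 / ω0 * 𝐓 τ ^ 2) τ := by
  obtain ⟨h1, h2, h3, h4⟩ := hsol τ hτ
  exact (((h1.const_mul (C1 * c1)).fun_mul h3).add
    ((h2.const_mul (C2 * c2)).fun_mul h4)).congr_deriv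
      (by simp only [alongHeading, acrossHeading]; ring)

theorem hasDerivAt_acrossHeading {τ : ℝ} (hτ : 0 ≤ τ) :
    HasDerivAt 𝐓 (a * k1 / ω0 * (C2 * c2 - C1 * c1) * z5 τ * z6 τ * 𝐒 τ
      - a * k2 / ω0 * 𝐓 τ * 𝐒 τ) τ := by
  obtain ⟨h1, h2, h3, h4⟩ := hsol τ hτ
  exact (((h1.const_mul (C1 * c1)).fun_mul h4).sub
    ((h2.const_mul (C2 * c2)).fun_mul h3)).congr_deriv
      (by simp only [alongHeading, acrossHeading]; ring)

theorem energy_add_integral_eq {t : ℝ} (ht : 0 ≤ t) :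
    𝐕 t + 2 * (a * k1 / ω0) * ∫ τ in (0)..t, 𝐒 τ ^ 2 = 𝐕 0 := by
  have hcont : ContinuousOn (fun τ => -(2 * (a * k1 / ω0)) * 𝐒 τ ^ 2) (Icc 0 t) :=
    (by fun_prop : Continuous fun v => -(2 * (a * k1 / ω0)) * alongHeading C1 C2 c1 c2 v ^ 2
      ).comp_continuousOn ((continuousOn_state hsol).mono Icc_subset_Ici_self)
  have hftc := intervalIntegral.integral_eq_sub_of_hasDerivAt
    (fun τ hτ => hasDerivAt_energy hsol (by rw [uIcc_of_le ht] at hτ; exact hτ.1))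
    (hcont.intervalIntegrable_of_Icc ht)
  rw [intervalIntegral.integral_const_mul] at hftc
  linarith

theorem exists_norm_state_le (hγ : 0 ≤ a * k1 / ω0) (hp : 0 < C1 * c1) (hq : 0 < C2 * c2)
    (hinit : z5 0 ^ 2 + z6 0 ^ 2 = 1) :
    ∃ R, ∀ τ ≥ (0 : ℝ), ‖𝐮 τ‖ ≤ R := by
  refine ⟨√(𝐕 0 / (C1 * c1)) + √(𝐕 0 / (C2 * c2)) + 1, fun τ hτ => ?_⟩
  have hV : 𝐕 τ ≤ 𝐕 0 := by
    have := energy_add_integral_eq hsol hτ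
    have : 0 ≤ ∫ s in (0)..τ, 𝐒 s ^ 2 :=
      intervalIntegral.integral_nonneg hτ fun _ _ => sq_nonneg _
    nlinarith
  have hx1 : |x1 τ| ≤ √(𝐕 0 / (C1 * c1)) :=
    Real.abs_le_sqrt (by rw [le_div_iff₀ hp]; nlinarith [mul_nonneg hq.le (sq_nonneg (x2 τ))])
  have hx2 : |x2 τ| ≤ √(𝐕 0 / (C2 * c2)) :=
    Real.abs_le_sqrt (by rw [le_div_iff₀ hq]; nlinarith [mul_nonneg hp.le (sq_nonneg (x1 τ))])
  have hz := sq_add_sq_eq_one hsol hinit hτ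
  have hz5 := abs_le_one_of_sq_add_sq_eq_one hz
  have hz6 := abs_le_one_of_sq_add_sq_eq_one ((add_comm _ _).trans hz)
  have := Real.sqrt_nonneg (𝐕 0 / (C1 * c1))
  have := Real.sqrt_nonneg (𝐕 0 / (C2 * c2))
  simp only [norm_prod_le_iff, Real.norm_eq_abs]
  refine ⟨?_, ?_, ?_, ?_⟩ <;> linarith

theorem integrableOn_alongHeading_sq (hγ : 0 < a * k1 / ω0) (hp : 0 < C1 * c1)
    (hq : 0 < C2 * c2) :
    IntegrableOn (fun τ => 𝐒 τ ^ 2) (Ioi 0) := by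
  have hcont : ContinuousOn (fun τ => 𝐒 τ ^ 2) (Ici 0) :=
    (by fun_prop : Continuous fun v => alongHeading C1 C2 c1 c2 v ^ 2).comp_continuousOn
      (continuousOn_state hsol)
  refine integrableOn_Ioi_of_intervalIntegral_norm_bounded (𝐕 0 / (2 * (a * k1 / ω0))) 0
    (fun t => ((hcont.mono Icc_subset_Ici_self).integrableOn_Icc).mono_set Ioc_subset_Icc_self)
    tendsto_id ?_
  filter_upwards [eventually_ge_atTop 0] with t ht
  simp only [norm_pow, Real.norm_eq_abs, sq_abs, id]
  rw [le_div_iff₀ (by positivity)]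
  have := energy_add_integral_eq hsol ht
  beta_reduce at this
  nlinarith [mul_nonneg hp.le (sq_nonneg (x1 t)), mul_nonneg hq.le (sq_nonneg (x2 t))]

theorem tendsto_alongHeading (hγ : 0 < a * k1 / ω0) (hp : 0 < C1 * c1) (hq : 0 < C2 * c2)
    {R : ℝ} (hR : ∀ τ ≥ (0 : ℝ), ‖𝐮 τ‖ ≤ R) :
    Tendsto 𝐒 atTop (𝓝 0) := by
  obtain ⟨K, hK⟩ := exists_lipschitzOnWith_of_hasDerivAt_comp (convex_Ici 0)
    (Φ := fun v => -(a * k1 / ω0 * (C1 * c1 * v.2.2.1 ^ 2 + C2 * c2 * v.2.2.2 ^ 2))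
      * alongHeading C1 C2 c1 c2 v + a * k2 / ω0 * acrossHeading C1 C2 c1 c2 v ^ 2)
    (by fun_prop) hR fun τ hτ => hasDerivAt_alongHeading hsol hτ
  exact tendsto_zero_of_lipschitzOnWith_of_tendsto_intervalIntegral_sq hK
    (tendsto_intervalIntegral_add_one_of_integrableOn_Ioi
      (integrableOn_alongHeading_sq hsol hγ hp hq))

theorem tendsto_acrossHeading (hβ : 0 < a * k2 / ω0) {R : ℝ}
    (hR : ∀ τ ≥ (0 : ℝ), ‖𝐮 τ‖ ≤ R) (hS : Tendsto 𝐒 atTop (𝓝 0)) :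
    Tendsto 𝐓 atTop (𝓝 0) := by
  have hw := isBoundedUnder_norm_comp (u := 𝐮) (l := atTop)
    (Φ := fun v => -(a * k1 / ω0 * (C1 * c1 * v.2.2.1 ^ 2 + C2 * c2 * v.2.2.2 ^ 2)))
    (by fun_prop) ((eventually_ge_atTop 0).mono hR)
  have hwin := tendsto_intervalIntegral_add_one_of_hasDerivAt_add hS
    (isBoundedUnder_le_mul_tendsto_zero hw hS)
    ((by fun_prop : Continuous fun v => -(a * k1 / ω0 * (C1 * c1 * v.2.2.1 ^ 2
      + C2 * c2 * v.2.2.2 ^ 2)) * alongHeading C1 C2 c1 c2 v).comp_continuousOn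
      (continuousOn_state hsol))
    ((by fun_prop : Continuous fun v => a * k2 / ω0 * acrossHeading C1 C2 c1 c2 v ^ 2
      ).comp_continuousOn (continuousOn_state hsol))
    fun τ hτ => hasDerivAt_alongHeading hsol hτ
  have hwinT : Tendsto (fun t => ∫ x in t..t + 1, 𝐓 x ^ 2) atTop (𝓝 0) := by
    simpa only [Function.comp_apply, intervalIntegral.integral_const_mul,
      inv_mul_cancel_left₀ hβ.ne', mul_zero] using hwin.const_mul (a * k2 / ω0)⁻¹
  obtain ⟨K, hK⟩ := exists_lipschitzOnWith_of_hasDerivAt_comp (convex_Ici 0)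
    (Φ := fun v => a * k1 / ω0 * (C2 * c2 - C1 * c1) * v.2.2.1 * v.2.2.2
      * alongHeading C1 C2 c1 c2 v
      - a * k2 / ω0 * acrossHeading C1 C2 c1 c2 v * alongHeading C1 C2 c1 c2 v)
    (by fun_prop) hR fun τ hτ => hasDerivAt_acrossHeading hsol hτ
  exact tendsto_zero_of_lipschitzOnWith_of_tendsto_intervalIntegral_sq hK hwinT

theorem tendsto_positions (hp : 0 < C1 * c1) (hq : 0 < C2 * c2)
    (hinit : z5 0 ^ 2 + z6 0 ^ 2 = 1) (hS : Tendsto 𝐒 atTop (𝓝 0))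
    (hT : Tendsto 𝐓 atTop (𝓝 0)) :
    Tendsto (fun τ => (x1 τ, x2 τ)) atTop (𝓝 (0, 0)) := by
  have hz5 : IsBoundedUnder (· ≤ ·) atTop (norm ∘ z5) := isBoundedUnder_of_eventually_le
    ((eventually_ge_atTop 0).mono fun τ hτ =>
      abs_le_one_of_sq_add_sq_eq_one (sq_add_sq_eq_one hsol hinit hτ))
  have hz6 : IsBoundedUnder (· ≤ ·) atTop (norm ∘ z6) := isBoundedUnder_of_eventually_le
    ((eventually_ge_atTop 0).mono fun τ hτ =>
      abs_le_one_of_sq_add_sq_eq_one ((add_comm _ _).trans (sq_add_sq_eq_one hsol hinit hτ)))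
  have hx1 : Tendsto x1 atTop (𝓝 0) := by
    have hlim : Tendsto (fun τ => (𝐒 τ * z5 τ + 𝐓 τ * z6 τ) / (C1 * c1)) atTop (𝓝 0) := by
      simpa using ((hS.zero_mul_isBoundedUnder_le hz5).add
        (hT.zero_mul_isBoundedUnder_le hz6)).div_const (C1 * c1)
    refine hlim.congr' ?_
    filter_upwards [eventually_ge_atTop 0] with τ hτ
    rw [div_eq_iff hp.ne']
    simp only [alongHeading, acrossHeading]
    linear_combination C1 * c1 * x1 τ * sq_add_sq_eq_one hsol hinit hτ
  have hx2 : Tendsto x2 atTop (𝓝 0) := by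
    have hlim : Tendsto (fun τ => (𝐒 τ * z6 τ - 𝐓 τ * z5 τ) / (C2 * c2)) atTop (𝓝 0) := by
      simpa using ((hS.zero_mul_isBoundedUnder_le hz6).sub
        (hT.zero_mul_isBoundedUnder_le hz5)).div_const (C2 * c2)
    refine hlim.congr' ?_
    filter_upwards [eventually_ge_atTop 0] with τ hτ
    rw [div_eq_iff hq.ne']
    simp only [alongHeading, acrossHeading]
    linear_combination C2 * c2 * x2 τ * sq_add_sq_eq_one hsol hinit hτ
  exact hx1.prodMk_nhds hx2

end AvgESC

/-- Every differentiable solution of the averaged ESC closed-loop system on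
`[0,∞)` starting on the unit circle in `(z5, z6)` has bounded range, and the averaged
shifted positions converge to the source: `(x1(τ), x2(τ)) → (0, 0)` as `τ → ∞`. -/
theorem stmt17 (a k1 k2 ω0 C1 C2 c1 c2 : ℝ)
    (ha : 0 < a) (hk1 : 0 < k1) (hk2 : 0 < k2) (hω0 : 0 < ω0)
    (hC1 : 0 < C1) (hC2 : 0 < C2) (hc1 : 0 < c1) (hc2 : 0 < c2)
    (x1 x2 z5 z6 : ℝ → ℝ)
    (hsol : AvgESC a k1 k2 ω0 C1 C2 c1 c2 x1 x2 z5 z6 (Set.Ici 0))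
    (hinit : z5 0 ^ 2 + z6 0 ^ 2 = 1) :
    (∃ C : ℝ, ∀ τ ≥ (0 : ℝ), ‖(x1 τ, x2 τ, z5 τ, z6 τ)‖ ≤ C) ∧
      Tendsto (fun τ => (x1 τ, x2 τ)) atTop (nhds ((0 : ℝ), (0 : ℝ))) := by
  have hγ : 0 < a * k1 / ω0 := by positivity
  have hβ : 0 < a * k2 / ω0 := by positivity
  have hp : 0 < C1 * c1 := mul_pos hC1 hc1
  have hq : 0 < C2 * c2 := mul_pos hC2 hc2
  obtain ⟨R, hR⟩ := hsol.exists_norm_state_le hγ.le hp hq hinit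
  have hS := hsol.tendsto_alongHeading hγ hp hq hR
  exact ⟨⟨R, hR⟩, hsol.tendsto_positions hp hq hinit hS (hsol.tendsto_acrossHeading hβ hR hS)⟩
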